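/- Let p be a prime, κ a regular uncountable cardinal, (G_α)_{α<κ} an increasing continuous chain of abelian groups with union G, and (λ_α)_{α<κ} a nondecreasing continuous sequence of cardinals with supremum λ. Suppose there are homomorphisms f_γ^α : G_α → ℤ/pℤ (γ < λ_α) such that: (a) f_γ^β restricted to G_α equals f_γ^α for α ≤ β, γ < λ_α; (b) for each α the family (f_γ^α)_{γ<λ_α} is linearly independent; (c) if α ≤ β and λ_α ≤ γ < λ_β then f_γ^β restricted to G_α is zero. Suppose further that for each α there is a direct sum decomposition Hom(G_α, ℤ/pℤ) = L_p^α ⊕ K_p^α of ℤ/pℤ-vector spaces, where L_p^α is the span of {f_γ^α : γ < λ_α}, together with a basis B_p^α of K_p^α and a function T_α : B_p^α → Hom(G_α, ℤ) such that: (d) for f ∈ K_p^β and α < β, the restriction of f to G_α lies in K_p^α, and for f ∈ B_p^β the restriction of f to G_α lies in B_p^α; (e) for each b ∈ B_p^α, the composition of T_α(b) with the reduction ℤ → ℤ/pℤ equals b; (f) for α < β and f ∈ B_p^β, T_α(f restricted to G_α) = T_β(f) restricted to G_α. Define f_γ : G → ℤ/pℤ by f_γ = ⋃{f_γ^α : γ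 < λ_α}. Then for every g ∈ Hom(G, ℤ/pℤ) there exist a finite set E ⊆ λ, coefficients z_γ ∈ ℤ/pℤ (γ ∈ E), and h ∈ Hom(G,ℤ) such that g − Σ_{γ∈E} z_γ f_γ equals the composition of h with the reduction ℤ → ℤ/pℤ; that is, the classes of {f_γ : γ < λ} generate Hom(G,ℤ/pℤ)/φ^p(Hom(G,ℤ)). -/

import Mathlib

/-!
At each level `α`, the family `{f_γ^α : γ < λ_α} ∪ B_p^α` is a basis of `Hom(G_α, ℤ/p)`, so
`g|G_α` has unique coordinates `(z_α, c_α)`. By (a), (c) and (d), restricting from `G_β` to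
`G_α` truncates `z_β` to `γ < λ_α` and pushes `c_β` forward along restriction. Hence the number
of nonzero coordinates is a nondecreasing `ℕ`-valued function of `α < κ`; as `cf κ > ℵ₀` it is
eventually constant. From then on `z_α` no longer changes and restriction is injective on the
support of `c_β`, so by (f) the integral lifts `∑ ĉ_b T_α(b)` (with `ĉ_b ∈ ℤ` representing
`c_b`) are compatible and glue to `h : G → ℤ`, whose reduction is `g - ∑ z_γ f_γ` by (e).
-/

open Finsupp Submodule

theorem Ordinal.exists_forall_ge_eq_of_monotoneOn_nat {o : Ordinal} (ho : Cardinal.aleph0 < o.cof)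
    {m : Ordinal → ℕ} (hm : MonotoneOn m (Set.Iio o)) :
    ∃ α₀ < o, ∀ β, α₀ ≤ β → β < o → m β = m α₀ := by
  have hbdd : BddAbove (m '' Set.Iio o) := by
    by_contra hunb
    have hlarge : ∀ n : ℕ, ∃ α < o, n < m α := fun n => by
      obtain ⟨_, ⟨α, hα, rfl⟩, hn⟩ := not_bddAbove_iff.mp hunb n
      exact ⟨α, hα, hn⟩
    choose s hso hsn using hlarge
    have hsup : ⨆ n, s n < o := Ordinal.lift_iSup_lt_of_lt_cof (by simpa using ho) hso
    exact (hsn _).not_ge (hm (hso _) hsup (Ordinal.le_iSup s (m (⨆ n, s n))))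
  have ho₀ : 0 < o := pos_iff_ne_zero.2 (by rintro rfl; simp at ho)
  obtain ⟨α₀, hα₀, hmax⟩ := Nat.sSup_mem (s := m '' Set.Iio o) ⟨m 0, 0, ho₀, rfl⟩ hbdd
  exact ⟨α₀, hα₀, fun β hle hβ =>
    le_antisymm (hmax ▸ le_csSup hbdd ⟨β, hβ, rfl⟩) (hm hα₀ hβ hle)⟩

theorem Finsupp.filter_eq_self_of_card_support_le {α M : Type*} [Zero M] {p : α → Prop}
    [DecidablePred p] {f : α →₀ M} (h : f.support.card ≤ (f.filter p).support.card) :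
    f.filter p = f := by
  have hsupp : (f.filter p).support = f.support :=
    Finset.eq_of_subset_of_card_le (Finset.filter_subset _ _) h
  refine (filter_eq_self_iff p f).mpr fun x hx => ?_
  rw [← mem_support_iff, ← hsupp, support_filter] at hx
  exact (Finset.mem_filter.mp hx).2

theorem Finsupp.injOn_of_card_support_le_mapDomain {α β M : Type*} [AddCommMonoid M]
    {f : α → β} {s : α →₀ M} (h : s.support.card ≤ (s.mapDomain f).support.card) :
    Set.InjOn f s.support := by
  classical
  refine Finset.card_image_iff.mp (le_antisymm Finset.card_image_le ?_)
  exact h.trans (Finset.card_le_card mapDomain_support)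

theorem Finsupp.sum_mapDomain_index_of_injOn {α β M N : Type*} [AddCommMonoid M]
    [AddCommMonoid N] {f : α → β} {s : α →₀ M} {h : β → M → N} (hf : Set.InjOn f s.support) :
    (s.mapDomain f).sum h = s.sum fun a m => h (f a) m := by
  classical
  rw [Finsupp.sum, mapDomain_support_of_injOn s hf, Finset.sum_image hf]
  exact Finset.sum_congr rfl fun a ha => by
    rw [mapDomain_apply' _ _ subset_rfl hf ha]

theorem Ordinal.exists_eventually_filter_eq_and_injOn {o : Ordinal} (ho : Cardinal.aleph0 < o.cof)
    {ι R : Type*} [AddCommMonoid R] {X : Ordinal → Type*}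
    {z : Ordinal → ι →₀ R} {P : Ordinal → ι → Prop} [∀ α, DecidablePred (P α)]
    {c : ∀ α, X α →₀ R}
    (hz : ∀ α β, α < β → β < o → z α = (z β).filter (P α))
    (hc : ∀ α β, α < β → β < o → ∃ r : X β → X α, c α = (c β).mapDomain r) :
    ∃ α₀ < o, ∀ α β, α₀ ≤ α → α ≤ β → β < o →
      z α = z β ∧ ∀ r : X β → X α, c α = (c β).mapDomain r → Set.InjOn r (c β).support := by
  classical
  have hle : ∀ α β, α ≤ β → β < o →
      (z α).support.card ≤ (z β).support.card ∧ (c α).support.card ≤ (c β).support.card := by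
    intro α β hαβ hβ
    rcases hαβ.eq_or_lt with rfl | hlt
    · exact ⟨le_rfl, le_rfl⟩
    obtain ⟨r, hr⟩ := hc α β hlt hβ
    rw [hz α β hlt hβ, hr]
    exact ⟨Finset.card_filter_le _ _,
      (Finset.card_le_card mapDomain_support).trans Finset.card_image_le⟩
  obtain ⟨α₀, hα₀, hconst⟩ := exists_forall_ge_eq_of_monotoneOn_nat ho
    (m := fun α => (z α).support.card + (c α).support.card) fun α _ β hβ hαβ =>
      add_le_add (hle α β hαβ hβ).1 (hle α β hαβ hβ).2
  refine ⟨α₀, hα₀, fun α β hα hαβ hβ => ?_⟩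
  have hsum := (hconst α hα (hαβ.trans_lt hβ)).trans (hconst β (hα.trans hαβ) hβ).symm
  have ⟨hzle, hcle⟩ := hle α β hαβ hβ
  refine ⟨?_, fun r hr => injOn_of_card_support_le_mapDomain (hr ▸ by omega)⟩
  rcases hαβ.eq_or_lt with rfl | hlt
  · rfl
  rw [hz α β hlt hβ]
  exact filter_eq_self_of_card_support_le (by rw [← hz α β hlt hβ]; omega)

theorem AddSubgroup.exists_addMonoidHom_comp_subtype_eq {G A : Type*} [AddCommGroup G]
    [AddCommGroup A] {S : Ordinal → AddSubgroup G} {o α₀ : Ordinal} (hα₀ : α₀ < o)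
    (hS : ∀ {α β : Ordinal}, α ≤ β → β < o → S α ≤ S β) (hcover : ∀ x, ∃ α < o, x ∈ S α)
    (φ : ∀ α, S α →+ A)
    (hφ : ∀ {α β : Ordinal} (h : S α ≤ S β), α₀ ≤ α → α < β → β < o →
      (φ β).comp (inclusion h) = φ α) :
    ∃ ψ : G →+ A, ∀ α, α₀ ≤ α → α < o → ψ.comp (S α).subtype = φ α := by
  have hstep : ∀ {α β : Ordinal} (hαβ : α ≤ β) (hβ : β < o) (x : G) (hx : x ∈ S α),
      α₀ ≤ α → φ β ⟨x, hS hαβ hβ hx⟩ = φ α ⟨x, hx⟩ := by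
    intro α β hαβ hβ x hx hα
    rcases hαβ.eq_or_lt with rfl | hlt
    · rfl
    · exact DFunLike.congr_fun (hφ (hS hαβ hβ) hα hlt hβ) ⟨x, hx⟩
  have hagree : ∀ {α β : Ordinal} (hα : α < o) (hβ : β < o) (x : G) (hxα : x ∈ S α)
      (hxβ : x ∈ S β), α₀ ≤ α → α₀ ≤ β → φ α ⟨x, hxα⟩ = φ β ⟨x, hxβ⟩ := by
    intro α β hα hβ x hxα hxβ h₀α h₀β
    rw [← hstep (le_max_left α β) (max_lt hα hβ) x hxα h₀α,
      ← hstep (le_max_right α β) (max_lt hα hβ) x hxβ h₀β]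
  choose idx hidx hmem using hcover
  have hlvl : ∀ x, max α₀ (idx x) < o := fun x => max_lt hα₀ (hidx x)
  have hmem' : ∀ x, x ∈ S (max α₀ (idx x)) := fun x => hS (le_max_right _ _) (hlvl x) (hmem x)
  let ψ : G →+ A := AddMonoidHom.mk' (fun x => φ _ ⟨x, hmem' x⟩) fun x y => by
    let γ := max (max α₀ (idx (x + y))) (max (max α₀ (idx x)) (max α₀ (idx y)))
    have hγ : γ < o := max_lt (hlvl _) (max_lt (hlvl _) (hlvl _))
    have h₀γ : α₀ ≤ γ := (le_max_left _ _).trans (le_max_left _ _)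
    have hx : x ∈ S γ := hS ((le_max_left _ _).trans (le_max_right _ _)) hγ (hmem' x)
    have hy : y ∈ S γ := hS ((le_max_right _ _).trans (le_max_right _ _)) hγ (hmem' y)
    rw [hagree (hlvl _) hγ _ _ (add_mem hx hy) (le_max_left _ _) h₀γ,
      hagree (hlvl x) hγ x _ hx (le_max_left _ _) h₀γ,
      hagree (hlvl y) hγ y _ hy (le_max_left _ _) h₀γ, ← map_add]
    rfl
  refine ⟨ψ, fun α hα₀α hα => AddMonoidHom.ext fun ⟨x, hx⟩ => ?_⟩
  exact hagree (hlvl x) hα x _ hx (le_max_left _ _) hα₀α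

theorem AddSubgroup.addMonoidHom_ext_of_chain {G A : Type*} [AddCommGroup G] [AddCommGroup A]
    {S : Ordinal → AddSubgroup G} {o α₀ : Ordinal} (hα₀ : α₀ < o)
    (hS : ∀ {α β : Ordinal}, α ≤ β → β < o → S α ≤ S β) (hcover : ∀ x, ∃ α < o, x ∈ S α)
    {φ ψ : G →+ A} (h : ∀ α, α₀ ≤ α → α < o → φ.comp (S α).subtype = ψ.comp (S α).subtype) :
    φ = ψ := by
  refine AddMonoidHom.ext fun x => ?_
  obtain ⟨α, hα, hx⟩ := hcover x
  have hβ : max α₀ α < o := max_lt hα₀ hα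
  exact DFunLike.congr_fun (h _ (le_max_left _ _) hβ) ⟨x, hS (le_max_right _ _) hβ hx⟩

section Complement

variable {R M N ι : Type*} [Ring R] [AddCommGroup M] [Module R M] [AddCommGroup N] [Module R N]
  {v : ι → M} {s : Set ι} {B : Set M}

theorem exists_linearCombination_add_linearCombination_eq
    (h : Codisjoint (span R (v '' s)) (span R B)) (x : M) :
    ∃ z ∈ supported R R s, ∃ c ∈ supported R R B,
      linearCombination R v z + linearCombination R id c = x := by
  obtain ⟨y, hy, w, hw, rfl⟩ := mem_sup.mp (h.eq_top ▸ mem_top : x ∈ span R (v '' s) ⊔ span R B)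
  obtain ⟨z, hz, rfl⟩ := (mem_span_image_iff_linearCombination R).mp hy
  obtain ⟨c, hc, rfl⟩ := (mem_span_image_iff_linearCombination R).mp
    (by rwa [Set.image_id] : w ∈ span R (id '' B))
  exact ⟨z, hz, c, hc, rfl⟩

theorem linearCombination_add_linearCombination_inj (hv : LinearIndepOn R v s)
    (hB : LinearIndepOn R id B) (h : Disjoint (span R (v '' s)) (span R B))
    {z z' : ι →₀ R} {c c' : M →₀ R} (hz : z ∈ supported R R s) (hz' : z' ∈ supported R R s)
    (hc : c ∈ supported R R B) (hc' : c' ∈ supported R R B) :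
    linearCombination R v z + linearCombination R id c =
        linearCombination R v z' + linearCombination R id c' ↔ z = z' ∧ c = c' := by
  refine ⟨fun heq => ?_, by rintro ⟨rfl, rfl⟩; rfl⟩
  have hdiff : linearCombination R v (z - z') = linearCombination R id (c' - c) := by
    rw [map_sub, map_sub, sub_eq_sub_iff_add_eq_add, heq, add_comm]
  have hzero : linearCombination R v (z - z') = 0 := by
    refine disjoint_def.mp h _ ((mem_span_image_iff_linearCombination R).mpr
      ⟨_, sub_mem hz hz', rfl⟩) ?_
    rw [hdiff, ← Set.image_id B]
    exact (mem_span_image_iff_linearCombination R).mpr ⟨_, sub_mem hc' hc, rfl⟩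
  refine ⟨sub_eq_zero.mp (linearIndepOn_iff.mp hv _ (sub_mem hz hz') hzero), ?_⟩
  exact (sub_eq_zero.mp (linearIndepOn_iff.mp hB _ (sub_mem hc' hc) (hdiff ▸ hzero))).symm

theorem Finsupp.linearCombination_congr_of_supported {w : ι → M} (h : ∀ i ∈ s, v i = w i)
    {z : ι →₀ R} (hz : z ∈ supported R R s) :
    linearCombination R v z = linearCombination R w z := by
  rw [linearCombination_apply, linearCombination_apply]
  exact Finsupp.sum_congr fun i hi => by rw [h i (hz hi)]

theorem Finsupp.filter_mem_supported {t : Set ι} [DecidablePred (· ∈ t)] (z : ι →₀ R) :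
    z.filter (· ∈ t) ∈ supported R R t :=
  fun _ hi => (Finset.mem_filter.mp hi).2

theorem Finsupp.linearCombination_filter_of_supported {t : Set ι} [DecidablePred (· ∈ t)]
    (h : ∀ i ∈ s \ t, v i = 0) {z : ι →₀ R} (hz : z ∈ supported R R s) :
    linearCombination R v z = linearCombination R v (z.filter (· ∈ t)) := by
  have hnot : z.filter (· ∉ t) ∈ supported R R (s \ t) := fun i hi =>
    ⟨hz (Finset.mem_filter.mp hi).1, (Finset.mem_filter.mp hi).2⟩
  conv_lhs => rw [← filter_add_filter_not z (· ∈ t)]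
  rw [map_add, add_eq_left, linearCombination_congr_of_supported (w := 0) h hnot,
    linearCombination_zero, LinearMap.zero_apply]

theorem map_linearCombination_add_linearCombination (ρ : M →ₗ[R] N) {w : ι → N} {t : Set ι}
    [DecidablePred (· ∈ t)] (hw : ∀ i ∈ t, ρ (v i) = w i) (h0 : ∀ i ∈ s \ t, ρ (v i) = 0)
    {z : ι →₀ R} (hz : z ∈ supported R R s) (c : M →₀ R) :
    ρ (linearCombination R v z + linearCombination R id c) =
      linearCombination R w (z.filter (· ∈ t)) + linearCombination R id (c.mapDomain ρ) := by
  rw [map_add, apply_linearCombination, apply_linearCombination, linearCombination_mapDomain,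
    linearCombination_filter_of_supported (v := ρ ∘ v) h0 hz,
    linearCombination_congr_of_supported (v := ρ ∘ v) hw (filter_mem_supported z)]
  rfl

theorem eq_filter_and_eq_mapDomain_of_map_eq (ρ : M →ₗ[R] N) {w : ι → N} {t : Set ι}
    {B' : Set N} [DecidablePred (· ∈ t)] (hw' : LinearIndepOn R w t) (hB' : LinearIndepOn R id B')
    (hd : Disjoint (span R (w '' t)) (span R B')) (hw : ∀ i ∈ t, ρ (v i) = w i)
    (h0 : ∀ i ∈ s \ t, ρ (v i) = 0) (hB : Set.MapsTo ρ B B')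
    {z : ι →₀ R} {c : M →₀ R} {z' : ι →₀ R} {c' : N →₀ R}
    (hz : z ∈ supported R R s) (hc : c ∈ supported R R B)
    (hz' : z' ∈ supported R R t) (hc' : c' ∈ supported R R B')
    (h : linearCombination R w z' + linearCombination R id c' =
      ρ (linearCombination R v z + linearCombination R id c)) :
    z' = z.filter (· ∈ t) ∧ c' = c.mapDomain ρ := by
  refine (linearCombination_add_linearCombination_inj hw' hB' hd hz' (filter_mem_supported z) hc'
    (supported_comap_lmapDomain R R ρ B' (supported_mono hB hc))).mp ?_
  rw [h, map_linearCombination_add_linearCombination ρ hw h0 hz]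
  rfl

end Complement

def AddMonoidHom.precompₗ (R A : Type*) {H H' : Type*} [AddCommGroup H] [AddCommGroup H']
    [AddCommGroup A] [Semiring R] [Module R A] (ι : H →+ H') : (H' →+ A) →ₗ[R] (H →+ A) where
  toFun φ := φ.comp ι
  map_add' _ _ := rfl
  map_smul' _ _ := rfl

theorem AddSubgroup.sum_smul_comp_subtype_eq_linearCombination {R G A ι : Type*} [Ring R]
    [AddCommGroup G] [AddCommGroup A] [Module R A] (H : AddSubgroup G) {F : ι → (G →+ A)}
    {v : ι → (H →+ A)} {s : Set ι} (hF : ∀ i ∈ s, (F i).comp H.subtype = v i) {z : ι →₀ R}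
    (hz : z ∈ supported R R s) :
    (∑ i ∈ z.support, z i • F i).comp H.subtype = linearCombination R v z := by
  change AddMonoidHom.precompₗ R A H.subtype (linearCombination R F z) = _
  rw [apply_linearCombination]
  exact linearCombination_congr_of_supported hF hz

def liftedCombination {n : ℕ} {X H : Type*} [AddCommGroup H] (T : X → (H →+ ℤ))
    (c : X →₀ ZMod n) : H →+ ℤ :=
  c.sum fun b a => (a.cast : ℤ) • T b

theorem castAddHom_comp_liftedCombination {n : ℕ} {H : Type*} [AddCommGroup H]
    {T : (H →+ ZMod n) → (H →+ ℤ)} {c : (H →+ ZMod n) →₀ ZMod n}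
    (hT : ∀ b ∈ c.support, (Int.castAddHom (ZMod n)).comp (T b) = b) :
    (Int.castAddHom (ZMod n)).comp (liftedCombination T c) = linearCombination (ZMod n) id c := by
  ext x
  simp only [liftedCombination, linearCombination_apply, Finsupp.sum, AddMonoidHom.comp_apply,
    AddMonoidHom.finsetSum_apply, map_sum]
  refine Finset.sum_congr rfl fun b hb => ?_
  have hbx := DFunLike.congr_fun (hT b hb) x
  simp only [AddMonoidHom.comp_apply, Int.coe_castAddHom] at hbx
  simp [hbx]

-- Lifting to `ℤ` is not additive, so coefficients merged by `r` would not lift correctly.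
theorem liftedCombination_mapDomain {n : ℕ} {X X' H H' : Type*} [AddCommGroup H] [AddCommGroup H']
    {T : X → (H →+ ℤ)} {T' : X' → (H' →+ ℤ)} {r : X → X'} {ι : H' →+ H} {c : X →₀ ZMod n}
    (hr : Set.InjOn r c.support) (hT : ∀ b ∈ c.support, T' (r b) = (T b).comp ι) :
    liftedCombination T' (c.mapDomain r) = (liftedCombination T c).comp ι := by
  rw [liftedCombination, liftedCombination, Finsupp.sum_mapDomain_index_of_injOn hr]
  change _ = AddMonoidHom.precompₗ ℤ ℤ ι (c.sum _)
  rw [map_finsuppSum]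
  exact Finsupp.sum_congr fun b hb => by rw [hT b hb, map_zsmul]; rfl

universe u v

open Cardinal in
theorem AddSubgroup.lift_le_of_linearIndepOn_Iio_ord {R : Type*} {G A : Type v} [Ring R]
    [Nontrivial R] [AddCommGroup G] [AddCommGroup A] [Module R A] {H : AddSubgroup G}
    {c : Cardinal.{u}} {v : Ordinal.{u} → (H →+ A)} (hv : LinearIndepOn R v (Set.Iio c.ord)) :
    lift.{v} c ≤ lift.{u} #(G → A) := by
  have hext : Function.Injective fun φ : H →+ A => Function.extend Subtype.val φ (0 : G → A) :=
    (Function.extend_injective Subtype.val_injective _).comp DFunLike.coe_injective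
  rw [← lift_le.{u + 1}, lift_lift, lift_lift]
  simpa [mk_Iio_ordinal] using lift_mk_le_lift_mk_of_injective (hext.comp hv.injective)

theorem classes_generate_quotient_general (p : ℕ)
    (κ : Cardinal) (hreg : κ.IsRegular) (hunc : Cardinal.aleph0 < κ)
    (G : Type) [AddCommGroup G]
    (Gs : Ordinal → AddSubgroup G)
    (hmono : ∀ {α β : Ordinal}, α ≤ β → β < κ.ord → Gs α ≤ Gs β)
    (hunion : (⋃ (α : Ordinal) (_ : α < κ.ord), (Gs α : Set G)) = Set.univ)
    (lam : Ordinal → Cardinal)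
    (lamSup : Cardinal)
    (hsup : lamSup = ⨆ α : {α : Ordinal // α < κ.ord}, lam α.1)
    (f : (α : Ordinal) → Ordinal → (Gs α →+ ZMod p))
    -- (a) compatibility of the `f`'s under restriction
    (hfa : ∀ {α β γ : Ordinal} (hsub : Gs α ≤ Gs β), α ≤ β → β < κ.ord →
      γ < (lam α).ord → (f β γ).comp (AddSubgroup.inclusion hsub) = f α γ)
    -- (b) linear independence of the `f`'s at each level
    (hfb : ∀ α < κ.ord, LinearIndependent (ZMod p)
      (fun γ : {γ : Ordinal // γ < (lam α).ord} => f α γ.1))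
    -- (c) new `f`'s vanish on old groups
    (hfc : ∀ {α β γ : Ordinal} (hsub : Gs α ≤ Gs β), α ≤ β → β < κ.ord →
      (lam α).ord ≤ γ → γ < (lam β).ord →
      (f β γ).comp (AddSubgroup.inclusion hsub) = 0)
    -- the complements `K_p^α`: `Hom(G_α, ℤ/pℤ) = L_p^α ⊕ K_p^α` with
    -- `L_p^α` the span of the `f_γ^α`, `γ < λ_α`
    (K : (α : Ordinal) → Submodule (ZMod p) (Gs α →+ ZMod p))
    (hdecomp : ∀ α < κ.ord,
      IsCompl (Submodule.span (ZMod p)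
        (Set.range fun γ : {γ : Ordinal // γ < (lam α).ord} => f α γ.1)) (K α))
    -- the bases `B_p^α` of `K_p^α`
    (B : (α : Ordinal) → Set (Gs α →+ ZMod p))
    (hBind : ∀ α < κ.ord, LinearIndependent (ZMod p)
      (fun b : B α => (b : Gs α →+ ZMod p)))
    (hBspan : ∀ α < κ.ord, Submodule.span (ZMod p) (B α) = K α)
    -- the lifting functions `T_α`
    (T : (α : Ordinal) → (Gs α →+ ZMod p) → (Gs α →+ ℤ))
    -- (d) restrictions map `K_p^β` into `K_p^α` and `B_p^β` into `B_p^α`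
    (hfd : ∀ {α β : Ordinal} (hsub : Gs α ≤ Gs β), α < β → β < κ.ord →
      (∀ g ∈ K β, g.comp (AddSubgroup.inclusion hsub) ∈ K α) ∧
      (∀ g ∈ B β, g.comp (AddSubgroup.inclusion hsub) ∈ B α))
    -- (e) `T_α` lifts the elements of `B_p^α` along `ℤ → ℤ/pℤ`
    (hfe : ∀ α < κ.ord, ∀ b ∈ B α,
      (Int.castAddHom (ZMod p)).comp (T α b) = b)
    -- (f) the liftings are compatible under restriction
    (hff : ∀ {α β : Ordinal} (hsub : Gs α ≤ Gs β), α < β → β < κ.ord →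
      ∀ g ∈ B β, T α (g.comp (AddSubgroup.inclusion hsub)) =
        (T β g).comp (AddSubgroup.inclusion hsub))
    -- the union homomorphisms `f_γ = ⋃ {f_γ^α : γ < λ_α}`
    (F : Ordinal → (G →+ ZMod p))
    (hF : ∀ {α γ : Ordinal}, α < κ.ord → γ < (lam α).ord →
      ∀ x : Gs α, F γ ↑x = f α γ x) :
    ∀ g : G →+ ZMod p, ∃ (E : Finset Ordinal) (z : Ordinal → ZMod p)
      (h : G →+ ℤ), (∀ γ ∈ E, γ < lamSup.ord) ∧
        g - ∑ γ ∈ E, z γ • F γ = (Int.castAddHom (ZMod p)).comp h := by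
  intro g
  classical
  have hcover : ∀ x, ∃ α < κ.ord, x ∈ Gs α := fun x => by
    simpa using Set.eq_univ_iff_forall.mp hunion x
  have hcompl : ∀ α < κ.ord,
      IsCompl (span (ZMod p) (f α '' Set.Iio (lam α).ord)) (span (ZMod p) (B α)) := fun α hα => by
    rw [hBspan α hα, Set.image_eq_range]
    exact hdecomp α hα
  choose! z hz c hc hzc using fun α (hα : α < κ.ord) =>
    exists_linearCombination_add_linearCombination_eq (hcompl α hα).codisjoint
      (g.comp (Gs α).subtype)
  have hres : ∀ α β (hαβ : α < β) (hβ : β < κ.ord),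
      z α = (z β).filter (· ∈ Set.Iio (lam α).ord) ∧ c α = (c β).mapDomain
        (AddMonoidHom.precompₗ (ZMod p) (ZMod p) (AddSubgroup.inclusion (hmono hαβ.le hβ))) :=
    fun α β hαβ hβ =>
    have hα := hαβ.trans hβ
    eq_filter_and_eq_mapDomain_of_map_eq (s := Set.Iio (lam β).ord) (t := Set.Iio (lam α).ord) _
      (hfb α hα) (hBind α hα) (hcompl α hα).disjoint (fun γ hγ => hfa _ hαβ.le hβ hγ)
      (fun γ hγ => hfc _ hαβ.le hβ (not_lt.1 hγ.2) hγ.1) (fun b hb => (hfd _ hαβ hβ).2 b hb)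
      (hz β hβ) (hc β hβ) (hz α hα) (hc α hα) (by rw [hzc α hα, hzc β hβ]; rfl)
  obtain ⟨α₀, hα₀, hstab⟩ := Ordinal.exists_eventually_filter_eq_and_injOn
    (hreg.cof_ord.symm ▸ hunc) (fun α β hαβ hβ => (hres α β hαβ hβ).1)
    (fun α β hαβ hβ => ⟨_, (hres α β hαβ hβ).2⟩)
  obtain ⟨h, hh⟩ := AddSubgroup.exists_addMonoidHom_comp_subtype_eq hα₀ hmono hcover
    (fun α => liftedCombination (T α) (c α)) fun {α β} hsub hα₀α hαβ hβ => by
      rw [(hres α β hαβ hβ).2]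
      exact (liftedCombination_mapDomain ((hstab α β hα₀α hαβ.le hβ).2 _ (hres α β hαβ hβ).2)
        fun b hb => hff hsub hαβ hβ b (hc β hβ hb)).symm
  refine ⟨(z α₀).support, z α₀, h, fun γ hγ => ?_, ?_⟩
  · have : Nontrivial (ZMod p) := nontrivial_of_ne _ _ (mem_support_iff.mp hγ)
    have hbdd : BddAbove (Set.range fun α : {α : Ordinal // α < κ.ord} => lam α.1) :=
      ⟨_, Set.forall_mem_range.2 fun α => by
        simpa using AddSubgroup.lift_le_of_linearIndepOn_Iio_ord (hfb α.1 α.2)⟩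
    calc γ < (lam α₀).ord := hz α₀ hα₀ hγ
      _ ≤ lamSup.ord := Cardinal.ord_le_ord.2 (hsup ▸ le_ciSup hbdd ⟨α₀, hα₀⟩)
  refine AddSubgroup.addMonoidHom_ext_of_chain hα₀ hmono hcover fun β hα₀β hβ => ?_
  rw [AddMonoidHom.comp_assoc, hh β hα₀β hβ,
    castAddHom_comp_liftedCombination fun b hb => hfe β hβ b (hc β hβ hb),
    (hstab α₀ β le_rfl hα₀β hβ).1,
    AddMonoidHom.sub_comp, AddSubgroup.sum_smul_comp_subtype_eq_linearCombination _
      (fun γ hγ => AddMonoidHom.ext (hF hβ hγ)) (hz β hβ), ← hzc β hβ, add_sub_cancel_left]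

/-- Shelah–Strüngmann: given an increasing continuous chain `(G_α)_{α<κ.ord}`
of subgroups of `G` (`κ` regular uncountable) with union `G`, a nondecreasing
continuous sequence of cardinals `(λ_α)` with supremum `λ`, compatible linearly
independent homomorphisms `f_γ^α : G_α → ℤ/pℤ` spanning `L_p^α`, together with
complements `K_p^α` (so `Hom(G_α,ℤ/pℤ) = L_p^α ⊕ K_p^α`), bases `B_p^α` of
`K_p^α`, and lifting functions `T_α : B_p^α → Hom(G_α,ℤ)` satisfying (d)–(f),
every `g ∈ Hom(G,ℤ/pℤ)` differs from a finite linear combination of the union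
homomorphisms `f_γ : G → ℤ/pℤ` (`γ < λ`) by an element of the image of
`Hom(G,ℤ)` under reduction mod `p`; that is, the classes of the `f_γ` generate
`Hom(G,ℤ/pℤ)/φ^p(Hom(G,ℤ))`. -/
theorem classes_generate_quotient (p : ℕ) (hp : p.Prime)
    (κ : Cardinal) (hreg : κ.IsRegular) (hunc : Cardinal.aleph0 < κ)
    (G : Type) [AddCommGroup G]
    (Gs : Ordinal → AddSubgroup G)
    (hmono : ∀ {α β : Ordinal}, α ≤ β → β < κ.ord → Gs α ≤ Gs β)
    (hcont : ∀ δ < κ.ord, Order.IsSuccLimit δ →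
      (Gs δ : Set G) = ⋃ (α : Ordinal) (_ : α < δ), (Gs α : Set G))
    (hunion : (⋃ (α : Ordinal) (_ : α < κ.ord), (Gs α : Set G)) = Set.univ)
    (lam : Ordinal → Cardinal)
    (hlmono : ∀ {α β : Ordinal}, α ≤ β → β < κ.ord → lam α ≤ lam β)
    (hlcont : ∀ δ < κ.ord, Order.IsSuccLimit δ →
      lam δ = ⨆ α : {α : Ordinal // α < δ}, lam α.1)
    (lamSup : Cardinal)
    (hsup : lamSup = ⨆ α : {α : Ordinal // α < κ.ord}, lam α.1)
    (f : (α : Ordinal) → Ordinal → (Gs α →+ ZMod p))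
    -- (a) compatibility of the `f`'s under restriction
    (hfa : ∀ {α β γ : Ordinal} (hsub : Gs α ≤ Gs β), α ≤ β → β < κ.ord →
      γ < (lam α).ord → (f β γ).comp (AddSubgroup.inclusion hsub) = f α γ)
    -- (b) linear independence of the `f`'s at each level
    (hfb : ∀ α < κ.ord, LinearIndependent (ZMod p)
      (fun γ : {γ : Ordinal // γ < (lam α).ord} => f α γ.1))
    -- (c) new `f`'s vanish on old groups
    (hfc : ∀ {α β γ : Ordinal} (hsub : Gs α ≤ Gs β), α ≤ β → β < κ.ord →
      (lam α).ord ≤ γ → γ < (lam β).ord →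
      (f β γ).comp (AddSubgroup.inclusion hsub) = 0)
    -- the complements `K_p^α`: `Hom(G_α, ℤ/pℤ) = L_p^α ⊕ K_p^α` with
    -- `L_p^α` the span of the `f_γ^α`, `γ < λ_α`
    (K : (α : Ordinal) → Submodule (ZMod p) (Gs α →+ ZMod p))
    (hdecomp : ∀ α < κ.ord,
      IsCompl (Submodule.span (ZMod p)
        (Set.range fun γ : {γ : Ordinal // γ < (lam α).ord} => f α γ.1)) (K α))
    -- the bases `B_p^α` of `K_p^α`
    (B : (α : Ordinal) → Set (Gs α →+ ZMod p))
    (hBsub : ∀ α < κ.ord, B α ⊆ (K α : Set (Gs α →+ ZMod p)))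
    (hBind : ∀ α < κ.ord, LinearIndependent (ZMod p)
      (fun b : B α => (b : Gs α →+ ZMod p)))
    (hBspan : ∀ α < κ.ord, Submodule.span (ZMod p) (B α) = K α)
    -- the lifting functions `T_α`
    (T : (α : Ordinal) → (Gs α →+ ZMod p) → (Gs α →+ ℤ))
    -- (d) restrictions map `K_p^β` into `K_p^α` and `B_p^β` into `B_p^α`
    (hfd : ∀ {α β : Ordinal} (hsub : Gs α ≤ Gs β), α < β → β < κ.ord →
      (∀ g ∈ K β, g.comp (AddSubgroup.inclusion hsub) ∈ K α) ∧
      (∀ g ∈ B β, g.comp (AddSubgroup.inclusion hsub) ∈ B α))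
    -- (e) `T_α` lifts the elements of `B_p^α` along `ℤ → ℤ/pℤ`
    (hfe : ∀ α < κ.ord, ∀ b ∈ B α,
      (Int.castAddHom (ZMod p)).comp (T α b) = b)
    -- (f) the liftings are compatible under restriction
    (hff : ∀ {α β : Ordinal} (hsub : Gs α ≤ Gs β), α < β → β < κ.ord →
      ∀ g ∈ B β, T α (g.comp (AddSubgroup.inclusion hsub)) =
        (T β g).comp (AddSubgroup.inclusion hsub))
    -- the union homomorphisms `f_γ = ⋃ {f_γ^α : γ < λ_α}`
    (F : Ordinal → (G →+ ZMod p))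
    (hF : ∀ {α γ : Ordinal}, α < κ.ord → γ < (lam α).ord →
      ∀ x : Gs α, F γ ↑x = f α γ x) :
    ∀ g : G →+ ZMod p, ∃ (E : Finset Ordinal) (z : Ordinal → ZMod p)
      (h : G →+ ℤ), (∀ γ ∈ E, γ < lamSup.ord) ∧
        g - ∑ γ ∈ E, z γ • F γ = (Int.castAddHom (ZMod p)).comp h :=
  classes_generate_quotient_general p κ hreg hunc G Gs hmono hunion lam lamSup hsup f hfa hfb hfc K
    hdecomp B hBind hBspan T hfd hfe hff F hF
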